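/- Let V be a type, E ⊆ V × V, and for each (u,v) ∈ E let d^{uv} : Fin 3 → ℝ give a diagonal 3×3 real matrix diag(d^{uv}). Let O : V → SO(3) be such that for every (u,v) ∈ E the matrix O_u · diag(d^{uv}) · (O_v)ᵀ is diagonal. Then there exists an assignment to each vertex u of a signed permutation matrix Π_u such that for every (u,v) ∈ E, Π_u · diag(d^{uv}) · (Π_v)ᵀ = O_u · diag(d^{uv}) · (O_v)ᵀ. -/

import Mathlib

open Matrix

/-- `O` is a real 3×3 special orthogonal matrix. -/
def IsSO3 (O : Matrix (Fin 3) (Fin 3) ℝ) : Prop := O * Oᵀ = 1 ∧ O.det = 1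

/-- `M` is a signed permutation matrix: exactly one nonzero entry, equal to `±1`,
in each row and column. -/
def IsSignedPerm (M : Matrix (Fin 3) (Fin 3) ℝ) : Prop :=
  ∃ (p : Equiv.Perm (Fin 3)) (s : Fin 3 → ℝ),
    (∀ j, s j = 1 ∨ s j = -1) ∧ M = Matrix.of fun i j => if i = p j then s j else 0

namespace SPaux
set_option maxHeartbeats 1000000

noncomputable section

abbrev Mat := Matrix (Fin 3) (Fin 3) ℝ

def sgn (x : ℝ) : ℝ := if 0 ≤ x then 1 else -1

lemma sgn_eq (x : ℝ) : sgn x = 1 ∨ sgn x = -1 := by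
  unfold sgn; split <;> simp

lemma sgn_neg {x : ℝ} (hx : x ≠ 0) : sgn (-x) = - sgn x := by
  rcases lt_or_gt_of_ne hx with h | h
  · have h1 : ¬ (0 ≤ x) := not_le.mpr h
    have h2 : (0:ℝ) ≤ -x := by linarith
    simp [sgn, h1, h2]
  · have h1 : (0:ℝ) ≤ x := h.le
    have h2 : ¬ ((0:ℝ) ≤ -x) := by simp; linarith
    simp [sgn, h1, h2]

lemma ite_val_add (c : Prop) [Decidable c] (x y : Fin 3) :
    ((if c then x else y) : Fin 3).val + ((if c then y else x) : Fin 3).val = x.val + y.val := by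
  by_cases h : c
  · rw [if_pos h, if_pos h]
  · rw [if_neg h, if_neg h]; omega

lemma le_of_sq_le_sq' {x y : ℝ} (hx : 0 ≤ x) (hy : 0 ≤ y) (h : x ^ 2 ≤ y ^ 2) : x ≤ y := by
  nlinarith [sq_nonneg (x - y), sq_nonneg (x + y)]

lemma eq_zero_of_sq_eq_zero {x : ℝ} (h : x ^ 2 = 0) : x = 0 := by
  nlinarith [sq_nonneg x]

lemma sgn_mul_self {x : ℝ} : sgn x * sgn x = 1 := by
  rcases sgn_eq x with h | h <;> rw [h] <;> norm_num

def score (A : Mat) (p : Equiv.Perm (Fin 3)) : ℝ := ∑ k, |A (p k) k|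

def key (p : Equiv.Perm (Fin 3)) : ℕ := (p 0).val + 4 * (p 1).val + 16 * (p 2).val

lemma key_inj : Function.Injective key := by
  intro p q h
  unfold key at h
  have hp0 : (p 0).val < 3 := (p 0).isLt
  have hp1 : (p 1).val < 3 := (p 1).isLt
  have hp2 : (p 2).val < 3 := (p 2).isLt
  have hq0 : (q 0).val < 3 := (q 0).isLt
  have hq1 : (q 1).val < 3 := (q 1).isLt
  have hq2 : (q 2).val < 3 := (q 2).isLt
  have e0 : p 0 = q 0 := Fin.ext (by omega)
  have e1 : p 1 = q 1 := Fin.ext (by omega)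
  have e2 : p 2 = q 2 := Fin.ext (by omega)
  apply Equiv.ext
  intro k
  fin_cases k <;> assumption

/-- a maximizer of `score A` with minimal `key`. -/
def bestSpec (A : Mat) : ∃ p : Equiv.Perm (Fin 3),
    (∀ q, score A q ≤ score A p) ∧
    (∀ q, (∀ r, score A r ≤ score A q) → key p ≤ key q) := by
  classical
  obtain ⟨p, -, hp⟩ := Finset.exists_max_image (Finset.univ : Finset (Equiv.Perm (Fin 3)))
    (score A) ⟨1, Finset.mem_univ 1⟩
  have hp' : ∀ q, score A q ≤ score A p := fun q => hp q (Finset.mem_univ q)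
  obtain ⟨b, hb, hbmin⟩ := Finset.exists_min_image
    (Finset.univ.filter (fun q : Equiv.Perm (Fin 3) => ∀ r, score A r ≤ score A q)) key
    ⟨p, by simpa using hp'⟩
  simp only [Finset.mem_filter, Finset.mem_univ, true_and] at hb
  refine ⟨b, hb, fun q hq => hbmin q ?_⟩
  simp only [Finset.mem_filter, Finset.mem_univ, true_and]
  exact hq

def best (A : Mat) : Equiv.Perm (Fin 3) := (bestSpec A).choose

lemma best_max (A : Mat) : ∀ q, score A q ≤ score A (best A) := (bestSpec A).choose_spec.1

lemma best_key (A : Mat) : ∀ q, (∀ r, score A r ≤ score A q) → key (best A) ≤ key q :=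
  (bestSpec A).choose_spec.2

lemma threeSum (f : Fin 3 → ℝ) (a b c : Fin 3) (hab : a ≠ b) (hac : a ≠ c) (hbc : b ≠ c)
    (hu : ({a, b, c} : Finset (Fin 3)) = Finset.univ) : ∑ k, f k = f a + f b + f c := by
  rw [← hu, Finset.sum_insert (by simp [hab, hac]),
    Finset.sum_insert (by simp [hbc]), Finset.sum_singleton]
  ring

lemma exists_others (k₀ : Fin 3) : ∃ k₁ k₂ : Fin 3, k₀ ≠ k₁ ∧ k₀ ≠ k₂ ∧ k₁ ≠ k₂ ∧
    ({k₀, k₁, k₂} : Finset (Fin 3)) = Finset.univ := by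
  fin_cases k₀
  · exact ⟨1, 2, by decide⟩
  · exact ⟨0, 2, by decide⟩
  · exact ⟨0, 1, by decide⟩

lemma row_norm {A : Mat} (hA : A * Aᵀ = 1) (i : Fin 3) : ∑ j, A i j ^ 2 = 1 := by
  have := congrFun (congrFun hA i) i
  simp only [Matrix.mul_apply, Matrix.transpose_apply, Matrix.one_apply_eq] at this
  simpa [pow_two] using this

lemma col_norm {A : Mat} (hA : A * Aᵀ = 1) (k : Fin 3) : ∑ i, A i k ^ 2 = 1 := by
  have hA' : Aᵀ * A = 1 := mul_eq_one_comm.mp hA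
  have := congrFun (congrFun hA' k) k
  simp only [Matrix.mul_apply, Matrix.transpose_apply, Matrix.one_apply_eq] at this
  simpa [pow_two] using this

/-- Every maximizer of the permanental score of an orthogonal matrix picks only
nonzero entries. -/
lemma maximizer_ne_zero {A : Mat} (hA : A * Aᵀ = 1) {p : Equiv.Perm (Fin 3)}
    (hp : ∀ q, score A q ≤ score A p) : ∀ k, A (p k) k ≠ 0 := by
  intro k₀ h0
  obtain ⟨k₁, k₂, h01, h02, h12, hcov⟩ := exists_others k₀
  have hpcov : ({p k₀, p k₁, p k₂} : Finset (Fin 3)) = Finset.univ := by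
    apply Finset.eq_univ_iff_forall.mpr
    intro i
    have hmem : p.symm i ∈ ({k₀, k₁, k₂} : Finset (Fin 3)) := hcov ▸ Finset.mem_univ _
    simp only [Finset.mem_insert, Finset.mem_singleton] at hmem ⊢
    rcases hmem with h | h | h
    · left; rw [← h, Equiv.apply_symm_apply]
    · right; left; rw [← h, Equiv.apply_symm_apply]
    · right; right; rw [← h, Equiv.apply_symm_apply]
  have hpi01 : p k₀ ≠ p k₁ := fun h => h01 (p.injective h)
  have hpi02 : p k₀ ≠ p k₂ := fun h => h02 (p.injective h)
  have hpi12 : p k₁ ≠ p k₂ := fun h => h12 (p.injective h)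
  -- expand scores
  have hscore : score A p = |A (p k₀) k₀| + |A (p k₁) k₁| + |A (p k₂) k₂| :=
    threeSum _ k₀ k₁ k₂ h01 h02 h12 hcov
  have hsw1 : score A (p * Equiv.swap k₀ k₁)
      = |A (p k₁) k₀| + |A (p k₀) k₁| + |A (p k₂) k₂| := by
    rw [score, threeSum _ k₀ k₁ k₂ h01 h02 h12 hcov]
    simp [Equiv.Perm.mul_apply, Equiv.swap_apply_left, Equiv.swap_apply_right,
      Equiv.swap_apply_of_ne_of_ne h02.symm h12.symm]
  have hsw2 : score A (p * Equiv.swap k₀ k₂)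
      = |A (p k₂) k₀| + |A (p k₁) k₁| + |A (p k₀) k₂| := by
    rw [score, threeSum _ k₀ k₁ k₂ h01 h02 h12 hcov]
    simp [Equiv.Perm.mul_apply, Equiv.swap_apply_left, Equiv.swap_apply_right,
      Equiv.swap_apply_of_ne_of_ne h01.symm h12]
  have ineq1 : |A (p k₁) k₀| + |A (p k₀) k₁| ≤ |A (p k₁) k₁| := by
    have := hp (p * Equiv.swap k₀ k₁)
    rw [hsw1, hscore, h0] at this
    simp only [abs_zero] at this
    linarith
  have ineq2 : |A (p k₂) k₀| + |A (p k₀) k₂| ≤ |A (p k₂) k₂| := by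
    have := hp (p * Equiv.swap k₀ k₂)
    rw [hsw2, hscore, h0] at this
    simp only [abs_zero] at this
    linarith
  -- norms
  have hcol : A (p k₀) k₀ ^ 2 + A (p k₁) k₀ ^ 2 + A (p k₂) k₀ ^ 2 = 1 := by
    have := col_norm hA k₀
    rwa [threeSum (fun i => A i k₀ ^ 2) (p k₀) (p k₁) (p k₂) hpi01 hpi02 hpi12 hpcov] at this
  have hrow0 : A (p k₀) k₀ ^ 2 + A (p k₀) k₁ ^ 2 + A (p k₀) k₂ ^ 2 = 1 := by
    have := row_norm hA (p k₀)
    rwa [threeSum (fun j => A (p k₀) j ^ 2) k₀ k₁ k₂ h01 h02 h12 hcov] at this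
  have hrow1 : A (p k₁) k₀ ^ 2 + A (p k₁) k₁ ^ 2 + A (p k₁) k₂ ^ 2 = 1 := by
    have := row_norm hA (p k₁)
    rwa [threeSum (fun j => A (p k₁) j ^ 2) k₀ k₁ k₂ h01 h02 h12 hcov] at this
  have hrow2 : A (p k₂) k₀ ^ 2 + A (p k₂) k₁ ^ 2 + A (p k₂) k₂ ^ 2 = 1 := by
    have := row_norm hA (p k₂)
    rwa [threeSum (fun j => A (p k₂) j ^ 2) k₀ k₁ k₂ h01 h02 h12 hcov] at this
  set a := |A (p k₁) k₀| with ha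
  set b := |A (p k₂) k₀| with hb
  set c := |A (p k₀) k₁| with hc
  set d := |A (p k₀) k₂| with hd
  set u := |A (p k₁) k₁| with hu
  set v := |A (p k₂) k₂| with hv
  have ha2 : a ^ 2 = A (p k₁) k₀ ^ 2 := sq_abs _
  have hb2 : b ^ 2 = A (p k₂) k₀ ^ 2 := sq_abs _
  have hc2 : c ^ 2 = A (p k₀) k₁ ^ 2 := sq_abs _
  have hd2 : d ^ 2 = A (p k₀) k₂ ^ 2 := sq_abs _
  have hu2 : u ^ 2 = A (p k₁) k₁ ^ 2 := sq_abs _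
  have hv2 : v ^ 2 = A (p k₂) k₂ ^ 2 := sq_abs _
  have h0sq : A (p k₀) k₀ ^ 2 = 0 := by rw [h0]; ring
  have hab : a ^ 2 + b ^ 2 = 1 := by rw [ha2, hb2]; linarith
  have hcd : c ^ 2 + d ^ 2 = 1 := by rw [hc2, hd2]; linarith
  have hua : a ^ 2 + u ^ 2 ≤ 1 := by
    rw [ha2, hu2]; linarith [sq_nonneg (A (p k₁) k₂), hrow1]
  have hvb : b ^ 2 + v ^ 2 ≤ 1 := by
    rw [hb2, hv2]; linarith [sq_nonneg (A (p k₂) k₁), hrow2]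
  have hna : 0 ≤ a := abs_nonneg _
  have hnb : 0 ≤ b := abs_nonneg _
  have hnc : 0 ≤ c := abs_nonneg _
  have hnd : 0 ≤ d := abs_nonneg _
  have hnu : 0 ≤ u := abs_nonneg _
  have hnv : 0 ≤ v := abs_nonneg _
  -- a + c ≤ u ≤ b, b + d ≤ v ≤ a ⟹ c + d ≤ 0 ⟹ c = d = 0, contradicting c² + d² = 1
  have hub : u ≤ b := le_of_sq_le_sq' hnu hnb (by linarith)
  have hva : v ≤ a := le_of_sq_le_sq' hnv hna (by linarith)
  have hcz : c = 0 := by linarith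
  have hdz : d = 0 := by linarith
  rw [hcz, hdz] at hcd
  norm_num at hcd

/-- The crux: the chosen permutations for two related orthogonal matrices agree
on the columns where `d` is nonzero. -/
lemma best_agree {A B : Mat} (d e : Fin 3 → ℝ)
    (hA : A * Aᵀ = 1) (hB : B * Bᵀ = 1)
    (habs : ∀ i k, d k ≠ 0 → |B i k| = |A i k|)
    (hAe : ∀ i k, A i k ≠ 0 → e i ^ 2 = d k ^ 2)
    (hBe : ∀ i k, B i k ≠ 0 → e i ^ 2 = d k ^ 2) :
    ∀ k, d k ≠ 0 → best A k = best B k := by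
  classical
  set pA := best A with hpA
  set pB := best B with hpB
  have hnzA : ∀ k, A (pA k) k ≠ 0 := maximizer_ne_zero hA (best_max A)
  have hnzB : ∀ k, B (pB k) k ≠ 0 := maximizer_ne_zero hB (best_max B)
  have heA : ∀ k, d k ≠ 0 → e (pA k) ≠ 0 := by
    intro k hk h
    have h2 := hAe (pA k) k (hnzA k)
    rw [h] at h2
    exact hk (eq_zero_of_sq_eq_zero (by linarith [h2]))
  have heB : ∀ k, d k ≠ 0 → e (pB k) ≠ 0 := by
    intro k hk h
    have h2 := hBe (pB k) k (hnzB k)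
    rw [h] at h2
    exact hk (eq_zero_of_sq_eq_zero (by linarith [h2]))
  have heA0 : ∀ k, d k = 0 → e (pA k) = 0 := by
    intro k hk
    have h2 := hAe (pA k) k (hnzA k)
    rw [hk] at h2
    exact eq_zero_of_sq_eq_zero (by linarith [h2])
  have heB0 : ∀ k, d k = 0 → e (pB k) = 0 := by
    intro k hk
    have h2 := hBe (pB k) k (hnzB k)
    rw [hk] at h2
    exact eq_zero_of_sq_eq_zero (by linarith [h2])
  -- the two hybrid permutations
  have hinj1 : Function.Injective (fun k => if d k = 0 then pB k else pA k) := by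
    intro k k' h
    simp only at h
    by_cases hk : d k = 0 <;> by_cases hk' : d k' = 0 <;> simp [hk, hk'] at h
    · exact h
    · exact absurd (h ▸ heB0 k hk) (heA k' hk')
    · exact absurd (h.symm ▸ heB0 k' hk') (heA k hk)
    · exact h
  have hinj2 : Function.Injective (fun k => if d k = 0 then pA k else pB k) := by
    intro k k' h
    simp only at h
    by_cases hk : d k = 0 <;> by_cases hk' : d k' = 0 <;> simp [hk, hk'] at h
    · exact h
    · exact absurd (h ▸ heA0 k hk) (heB k' hk')
    · exact absurd (h.symm ▸ heA0 k' hk') (heB k hk)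
    · exact h
  set q1 : Equiv.Perm (Fin 3) :=
    Equiv.ofBijective _ (Finite.injective_iff_bijective.mp hinj1) with hq1
  set q2 : Equiv.Perm (Fin 3) :=
    Equiv.ofBijective _ (Finite.injective_iff_bijective.mp hinj2) with hq2
  have hq1app : ∀ k, q1 k = if d k = 0 then pB k else pA k := fun k => rfl
  have hq2app : ∀ k, q2 k = if d k = 0 then pA k else pB k := fun k => rfl
  -- score identity
  have hscore : score A pA + score B pB = score B q1 + score A q2 := by
    unfold score
    rw [← Finset.sum_add_distrib, ← Finset.sum_add_distrib]
    apply Finset.sum_congr rfl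
    intro k _
    simp only [hq1app, hq2app]
    by_cases hk : d k = 0
    · rw [if_pos hk, if_pos hk]
      ring
    · rw [if_neg hk, if_neg hk, habs (pA k) k hk, ← habs (pB k) k hk]
  have hle1 : score B q1 ≤ score B pB := best_max B q1
  have hle2 : score A q2 ≤ score A pA := best_max A q2
  have heq1 : score B q1 = score B pB := by linarith
  have heq2 : score A q2 = score A pA := by linarith
  have hq1max : ∀ r, score B r ≤ score B q1 := fun r => heq1 ▸ best_max B r
  have hq2max : ∀ r, score A r ≤ score A q2 := fun r => heq2 ▸ best_max A r
  have hk1 : key pB ≤ key q1 := best_key B q1 hq1max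
  have hk2 : key pA ≤ key q2 := best_key A q2 hq2max
  have hksum : key q1 + key q2 = key pA + key pB := by
    unfold key
    simp only [hq1app, hq2app]
    have e0 := ite_val_add (d 0 = 0) (pB 0) (pA 0)
    have e1 := ite_val_add (d 1 = 0) (pB 1) (pA 1)
    have e2 := ite_val_add (d 2 = 0) (pB 2) (pA 2)
    omega
  have hkeq : key q1 = key pB := by omega
  have hq1eq : q1 = pB := key_inj hkeq
  intro k hk
  have := congrFun (congrArg (fun (p : Equiv.Perm (Fin 3)) => (p : Fin 3 → Fin 3)) hq1eq) k
  rw [hq1app k, if_neg hk] at this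
  exact this

end

end SPaux

theorem signed_perms_realize_diagonal_preserving_rotations
    {V : Type*} (E : Set (V × V)) (d : V → V → Fin 3 → ℝ)
    (O : V → Matrix (Fin 3) (Fin 3) ℝ) (hO : ∀ u, IsSO3 (O u))
    (hdiag : ∀ uv ∈ E, ∃ e : Fin 3 → ℝ,
      O uv.1 * Matrix.diagonal (d uv.1 uv.2) * (O uv.2)ᵀ = Matrix.diagonal e) :
    ∃ Q : V → Matrix (Fin 3) (Fin 3) ℝ, (∀ u, IsSignedPerm (Q u)) ∧
      ∀ uv ∈ E, Q uv.1 * Matrix.diagonal (d uv.1 uv.2) * (Q uv.2)ᵀ =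
        O uv.1 * Matrix.diagonal (d uv.1 uv.2) * (O uv.2)ᵀ := by
  classical
  set Q : V → Matrix (Fin 3) (Fin 3) ℝ := fun u =>
    Matrix.of fun i j => if i = SPaux.best (O u) j then SPaux.sgn (O u (SPaux.best (O u) j) j)
      else 0 with hQ
  refine ⟨Q, fun u => ⟨SPaux.best (O u), fun j => SPaux.sgn (O u (SPaux.best (O u) j) j),
    fun j => SPaux.sgn_eq _, rfl⟩, ?_⟩
  rintro ⟨u, v⟩ huv
  obtain ⟨e, he⟩ := hdiag (u, v) huv
  simp only at he ⊢
  set A := O u with hAdef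
  set B := O v with hBdef
  set d' : Fin 3 → ℝ := d u v with hd'
  have hA : A * Aᵀ = 1 := (hO u).1
  have hB : B * Bᵀ = 1 := (hO v).1
  -- entrywise relations
  have hABe : ∀ i k, A i k * d' k = e i * B i k := by
    intro i k
    have h1 : A * Matrix.diagonal d' = Matrix.diagonal e * B := by
      have hBtB : Bᵀ * B = 1 := mul_eq_one_comm.mp hB
      calc A * Matrix.diagonal d' = A * Matrix.diagonal d' * (Bᵀ * B) := by rw [hBtB, mul_one]
        _ = (A * Matrix.diagonal d' * Bᵀ) * B := by simp only [Matrix.mul_assoc]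
        _ = Matrix.diagonal e * B := by rw [he]
    have := congrFun (congrFun h1 i) k
    rwa [Matrix.mul_diagonal, Matrix.diagonal_mul] at this
  have hBAe : ∀ i k, B i k * d' k = e i * A i k := by
    intro i k
    have hT : B * Matrix.diagonal d' * Aᵀ = Matrix.diagonal e := by
      have := congrArg Matrix.transpose he
      rw [Matrix.transpose_mul, Matrix.transpose_mul, Matrix.transpose_transpose,
        Matrix.diagonal_transpose, Matrix.diagonal_transpose] at this
      rw [← Matrix.mul_assoc] at this
      exact this
    have h1 : B * Matrix.diagonal d' = Matrix.diagonal e * A := by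
      have hAtA : Aᵀ * A = 1 := mul_eq_one_comm.mp hA
      calc B * Matrix.diagonal d' = B * Matrix.diagonal d' * (Aᵀ * A) := by rw [hAtA, mul_one]
        _ = (B * Matrix.diagonal d' * Aᵀ) * A := by simp only [Matrix.mul_assoc]
        _ = Matrix.diagonal e * A := by rw [hT]
    have := congrFun (congrFun h1 i) k
    rwa [Matrix.mul_diagonal, Matrix.diagonal_mul] at this
  have hAe : ∀ i k, A i k ≠ 0 → e i ^ 2 = d' k ^ 2 := by
    intro i k h
    have hfac : A i k * (d' k ^ 2 - e i ^ 2) = 0 := by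
      linear_combination d' k * (hABe i k) + e i * (hBAe i k)
    rcases mul_eq_zero.mp hfac with h' | h'
    · exact absurd h' h
    · linarith
  have hBe : ∀ i k, B i k ≠ 0 → e i ^ 2 = d' k ^ 2 := by
    intro i k h
    have hfac : B i k * (d' k ^ 2 - e i ^ 2) = 0 := by
      linear_combination d' k * (hBAe i k) + e i * (hABe i k)
    rcases mul_eq_zero.mp hfac with h' | h'
    · exact absurd h' h
    · linarith
  -- case analysis on signs
  have hcase : ∀ i k, d' k ≠ 0 → A i k ≠ 0 →
      (e i = d' k ∧ B i k = A i k) ∨ (e i = -d' k ∧ B i k = -A i k) := by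
    intro i k hk hAik
    have hsq := hAe i k hAik
    have hfac : (e i - d' k) * (e i + d' k) = 0 := by linear_combination hsq
    rcases mul_eq_zero.mp hfac with h' | h'
    · left
      have heq : e i = d' k := by linarith
      refine ⟨heq, ?_⟩
      have h3 := hBAe i k
      rw [heq] at h3
      have h4 : B i k * d' k = A i k * d' k := by linarith [h3]
      exact mul_right_cancel₀ hk h4
    · right
      have heq : e i = -d' k := by linarith
      refine ⟨heq, ?_⟩
      have h3 := hBAe i k
      rw [heq] at h3
      have h4 : B i k * d' k = (-A i k) * d' k := by linarith [h3]
      exact mul_right_cancel₀ hk h4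
  have hBzero : ∀ i k, d' k ≠ 0 → A i k = 0 → B i k = 0 := by
    intro i k hk h
    have := hBAe i k
    rw [h, mul_zero] at this
    exact (mul_eq_zero.mp this).resolve_right hk
  have habs : ∀ i k, d' k ≠ 0 → |B i k| = |A i k| := by
    intro i k hk
    by_cases hAik : A i k = 0
    · rw [hAik, hBzero i k hk hAik]
    · rcases hcase i k hk hAik with ⟨-, h⟩ | ⟨-, h⟩
      · rw [h]
      · rw [h, abs_neg]
  have hagree := SPaux.best_agree d' e hA hB habs hAe hBe
  set pA := SPaux.best A with hpAdef
  set pB := SPaux.best B with hpBdef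
  have hnzA : ∀ k, A (pA k) k ≠ 0 := SPaux.maximizer_ne_zero hA (SPaux.best_max A)
  have hnzB : ∀ k, B (pB k) k ≠ 0 := SPaux.maximizer_ne_zero hB (SPaux.best_max B)
  rw [he]
  ext i j
  have hentry : (Q u * Matrix.diagonal d' * (Q v)ᵀ) i j
      = ∑ k, (Q u) i k * d' k * (Q v) j k := by
    rw [Matrix.mul_apply]
    apply Finset.sum_congr rfl
    intro k _
    rw [Matrix.mul_diagonal, Matrix.transpose_apply]
  rw [hentry]
  have hterm : ∀ k, (Q u) i k * d' k * (Q v) j k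
      = if k = pA.symm i ∧ i = j then e i else 0 := by
    intro k
    have hQu : (Q u) i k = if i = pA k then SPaux.sgn (A (pA k) k) else 0 := rfl
    have hQv : (Q v) j k = if j = pB k then SPaux.sgn (B (pB k) k) else 0 := rfl
    rw [hQu, hQv]
    by_cases hi : i = pA k
    · have hksym : k = pA.symm i := by rw [hi, Equiv.symm_apply_apply]
      by_cases hd : d' k = 0
      · have hei : e i = 0 := by
          have h2 := hAe (pA k) k (hnzA k)
          rw [hd, ← hi] at h2
          exact SPaux.eq_zero_of_sq_eq_zero (by linarith [h2])
        simp [hd, hei]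
      · have hpBk : pB k = pA k := (hagree k hd).symm
        by_cases hj : j = pB k
        · have hij : i = j := by rw [hi, hj, hpBk]
          simp only [if_pos hi, if_pos hj, if_pos (And.intro hksym hij)]
          have hAik : A (pA k) k ≠ 0 := hnzA k
          have hs := SPaux.sgn_mul_self (x := A (pA k) k)
          rcases hcase (pA k) k hd hAik with ⟨he1, he2⟩ | ⟨he1, he2⟩
          · rw [hpBk, he2, show e i = d' k from hi ▸ he1]
            linear_combination d' k * hs
          · rw [hpBk, he2, SPaux.sgn_neg hAik, show e i = -d' k from hi ▸ he1]
            linear_combination (-(d' k)) * hs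
        · have hij : ¬(k = pA.symm i ∧ i = j) := by
            rintro ⟨-, hij⟩
            exact hj (by rw [← hij, hi, hpBk])
          simp only [if_pos hi, if_neg hj, if_neg hij, mul_zero]
    · have hksym : ¬(k = pA.symm i ∧ i = j) := by
        rintro ⟨hk', -⟩
        exact hi (by rw [hk', Equiv.apply_symm_apply])
      simp [hi, hksym]
  rw [Finset.sum_congr rfl (fun k _ => hterm k)]
  by_cases hij : i = j
  · simp only [hij, and_true]
    rw [Finset.sum_ite_eq' Finset.univ (pA.symm j) (fun _ => e j)]
    simp [Matrix.diagonal_apply_eq, hij]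
  · simp [hij, Matrix.diagonal_apply_ne _ hij]
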